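/- Let q ∈ (0,1) and α ∈ (0,1) be real. Then the series ∑_{k=0}^{∞} k·α^k/(k)_q converges, and (α;q)_∞ · ∑_{k=0}^{∞} k·α^k/(k)_q = ∑_{i=0}^{∞} α q^i/(1 − α q^i). (Equivalently, the mean of the q-geometric distribution qGeom(α) equals γ(α) := α·(log E_q)′(α), where E_q(x) = (x;q)_∞^{−1}.) -/

import Mathlib

open Finset

/-- `(x; q)_k` : the finite q-Pochhammer symbol `∏_{i=0}^{k-1} (1 - x qⁱ)`. -/
noncomputable def qPoch (q x : ℝ) (k : ℕ) : ℝ := ∏ i ∈ Finset.range k, (1 - x * q ^ i)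

/-- `(x; q)_∞` : the infinite q-Pochhammer symbol `∏_{i=0}^{∞} (1 - x qⁱ)`. -/
noncomputable def qPochInf (q x : ℝ) : ℝ := ∏' i : ℕ, (1 - x * q ^ i)

/-- `(n)_q := (q; q)_n = ∏_{i=1}^{n} (1 - qⁱ)`. -/
noncomputable def qFac (q : ℝ) (n : ℕ) : ℝ := qPoch q q n

/-- The q-binomial coefficient `binom(n,k)_q = (n)_q / ((k)_q (n-k)_q)`. -/
noncomputable def qBinom (q : ℝ) (n k : ℕ) : ℝ := qFac q n / (qFac q k * qFac q (n - k))

/-!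
Put `E(x) = ∑ xᵏ/(k)_q` (`qSeries q 1`) and `S(x) = ∑ k xᵏ/(k)_q` (`qSeries q Nat.cast`).
Comparing coefficients, `E(x) - E(xq) = x E(x)` and `S(x) - S(xq) = x (S(x) + E(x))`, while
`(x;q)_∞ = (1 - x) (xq;q)_∞`. So `(x;q)_∞ E(x)` is invariant under `x ↦ xq`, and letting
`x qⁿ → 0` gives Euler's identity `(x;q)_∞ E(x) = 1`. With it, `T(x) = (x;q)_∞ S(x)` satisfies
`T(x) - T(xq) = x / (1 - x)`; telescoping along `x qⁿ → 0`, where `T → 0`, sums the series.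
-/

open Filter Topology

section

variable {q : ℝ}

lemma abs_mul_pow_le (hq : |q| ≤ 1) (x : ℝ) (i : ℕ) : |x * q ^ i| ≤ |x| := by
  rw [abs_mul, abs_pow]
  exact mul_le_of_le_one_right (abs_nonneg x) (pow_le_one₀ (abs_nonneg q) hq)

lemma qFac_succ (k : ℕ) : qFac q (k + 1) = qFac q k * (1 - q ^ (k + 1)) := by
  rw [qFac, qPoch, prod_range_succ, ← pow_succ']
  rfl

lemma qFac_pos (hq0 : 0 ≤ q) (hq1 : q < 1) (k : ℕ) : 0 < qFac q k := by
  unfold qFac qPoch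
  exact prod_pos fun i _ =>
    sub_pos.2 (by rw [← pow_succ']; exact pow_lt_one₀ hq0 hq1 i.succ_ne_zero)

lemma summable_norm_neg_mul_pow (hq : |q| < 1) (x : ℝ) : Summable fun i => ‖-(x * q ^ i)‖ := by
  simpa [abs_mul] using (summable_geometric_of_lt_one (abs_nonneg q) hq).mul_left |x|

lemma hasProd_qPochInf (hq : |q| < 1) (x : ℝ) :
    HasProd (fun i => 1 - x * q ^ i) (qPochInf q x) := by
  have hmul := multipliable_one_add_of_summable (summable_norm_neg_mul_pow hq x)
  simp only [← sub_eq_add_neg] at hmul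
  exact hmul.hasProd

lemma qPochInf_ne_zero {x : ℝ} (hq : |q| < 1) (hx : |x| < 1) : qPochInf q x ≠ 0 := by
  have hfactor (i : ℕ) : 1 + -(x * q ^ i) ≠ 0 := by
    have := (abs_mul_pow_le hq.le x i).trans_lt hx
    rw [← sub_eq_add_neg, sub_ne_zero]
    exact fun h => by simp [← h] at this
  simpa [qPochInf, ← sub_eq_add_neg] using tprod_one_add_ne_zero_of_summable hfactor
    (summable_norm_neg_mul_pow hq x)

lemma qPochInf_q_pos (hq0 : 0 ≤ q) (hq1 : q < 1) : 0 < qPochInf q q := by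
  have hq : |q| < 1 := by rwa [abs_of_nonneg hq0]
  refine lt_of_le_of_ne ?_ (qPochInf_ne_zero hq hq).symm
  exact ge_of_tendsto' (hasProd_qPochInf hq q).tendsto_prod_nat fun n => (qFac_pos hq0 hq1 n).le

lemma qPochInf_q_le_qFac (hq0 : 0 ≤ q) (hq1 : q < 1) (k : ℕ) : qPochInf q q ≤ qFac q k := by
  have hq : |q| < 1 := by rwa [abs_of_nonneg hq0]
  have hanti : Antitone (qFac q) := antitone_nat_of_succ_le fun n => by
    rw [qFac_succ]
    exact mul_le_of_le_one_right (qFac_pos hq0 hq1 n).le (by linarith [pow_nonneg hq0 (n + 1)])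
  exact hanti.le_of_tendsto (hasProd_qPochInf hq q).tendsto_prod_nat k

lemma qPoch_mul_qPochInf (hq : |q| < 1) (x : ℝ) (n : ℕ) :
    qPoch q x n * qPochInf q (x * q ^ n) = qPochInf q x := by
  have htail : (fun i => 1 - x * q ^ (i + n)) = fun i => 1 - x * q ^ n * q ^ i := by
    ext i
    ring
  have hmul := (hasProd_qPochInf hq (x * q ^ n)).multipliable
  rw [← htail] at hmul
  rw [qPoch, qPochInf, qPochInf, ← htail]
  exact Multipliable.prod_mul_tprod_nat_mul' (f := fun i => 1 - x * q ^ i) hmul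

lemma qPochInf_eq_one_sub_mul (hq : |q| < 1) (x : ℝ) :
    qPochInf q x = (1 - x) * qPochInf q (x * q) := by
  simpa [qPoch] using (qPoch_mul_qPochInf hq x 1).symm

lemma tendsto_qPochInf_mul_pow {x : ℝ} (hq : |q| < 1) (hx : |x| < 1) :
    Tendsto (fun n => qPochInf q (x * q ^ n)) atTop (𝓝 1) := by
  have hne := qPochInf_ne_zero hq hx
  have hlim := ((hasProd_qPochInf hq x).tendsto_prod_nat.inv₀ hne).const_mul (qPochInf q x)
  rw [mul_inv_cancel₀ hne] at hlim
  refine hlim.congr fun n => ?_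
  have hpoch : qPoch q x n ≠ 0 := fun h => hne (by rw [← qPoch_mul_qPochInf hq x n, h, zero_mul])
  change _ * (qPoch q x n)⁻¹ = _
  rw [← qPoch_mul_qPochInf hq x n, mul_comm (qPoch q x n), mul_inv_cancel_right₀ hpoch]

noncomputable def qSeries (q : ℝ) (g : ℕ → ℝ) (y : ℝ) : ℝ := ∑' k, g k * y ^ k / qFac q k

lemma summable_div_qFac (hq0 : 0 ≤ q) (hq1 : q < 1) {b : ℕ → ℝ} (hb : Summable fun k => |b k|) :
    Summable fun k => b k / qFac q k := by
  refine (hb.mul_right (qPochInf q q)⁻¹).of_norm_bounded fun k => ?_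
  rw [Real.norm_eq_abs, abs_div, abs_of_pos (qFac_pos hq0 hq1 k), div_eq_mul_inv]
  exact mul_le_mul_of_nonneg_left
    (inv_anti₀ (qPochInf_q_pos hq0 hq1) (qPochInf_q_le_qFac hq0 hq1 k)) (abs_nonneg _)

lemma summable_abs_one_mul_pow {y : ℝ} (hy : |y| < 1) :
    Summable fun k => |(1 : ℕ → ℝ) k * y ^ k| := by
  simpa [abs_pow] using summable_geometric_of_lt_one (abs_nonneg y) hy

lemma summable_abs_natCast_mul_pow {y : ℝ} (hy : |y| < 1) :
    Summable fun k : ℕ => |(k : ℝ) * y ^ k| := by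
  have := summable_pow_mul_geometric_of_norm_lt_one 1 (by rwa [Real.norm_eq_abs] : ‖y‖ < 1)
  simpa using this.abs

lemma tendsto_qSeries {ι : Type*} {l : Filter ι} (hq0 : 0 ≤ q) (hq1 : q < 1) {g : ℕ → ℝ}
    {r : ℝ} (hg : Summable fun k => |g k * r ^ k|) {y : ι → ℝ} (hy : Tendsto y l (𝓝 0))
    (hyr : ∀ i, |y i| ≤ r) : Tendsto (fun i => qSeries q g (y i)) l (𝓝 (g 0)) := by
  have hbound := summable_div_qFac hq0 hq1 (b := fun k => |g k * r ^ k|) (by simpa using hg)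
  have hlim := tendsto_tsum_of_dominated_convergence hbound
    (f := fun i k => g k * y i ^ k / qFac q k) (g := fun k => g k * 0 ^ k / qFac q k)
    (fun k => ((hy.pow k).const_mul (g k)).div_const _) (Eventually.of_forall fun i k => ?_)
  · rwa [tsum_eq_single 0 fun k hk => by simp [hk], pow_zero, mul_one, qFac, qPoch,
      prod_range_zero, div_one] at hlim
  · rw [Real.norm_eq_abs, abs_div, abs_of_pos (qFac_pos hq0 hq1 k), abs_mul, abs_mul, abs_pow,
      abs_pow]
    have hyk : |y i| ^ k ≤ |r| ^ k :=
      pow_le_pow_left₀ (abs_nonneg _) ((hyr i).trans (le_abs_self r)) k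
    have := qFac_pos hq0 hq1 k
    gcongr

lemma qSeries_sub_qSeries_mul (hq0 : 0 ≤ q) (hq1 : q < 1) {g : ℕ → ℝ} {y : ℝ}
    (hy : Summable fun k => g k * y ^ k / qFac q k)
    (hqy : Summable fun k => g k * (y * q) ^ k / qFac q k) :
    qSeries q g y - qSeries q g (y * q) = y * qSeries q (fun k => g (k + 1)) y := by
  rw [qSeries, qSeries, ← hy.tsum_sub hqy, (hy.sub hqy).tsum_eq_zero_add, qSeries,
    ← tsum_mul_left]
  have hshift (k : ℕ) : g (k + 1) * y ^ (k + 1) / qFac q (k + 1)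
      - g (k + 1) * (y * q) ^ (k + 1) / qFac q (k + 1) = y * (g (k + 1) * y ^ k / qFac q k) := by
    have hfac : 1 - q ^ (k + 1) ≠ 0 := (sub_pos.2 (pow_lt_one₀ hq0 hq1 k.succ_ne_zero)).ne'
    have hfac' := (qFac_pos hq0 hq1 k).ne'
    rw [qFac_succ]
    field_simp
    ring
  simp [hshift]

lemma qPochInf_mul_qSeries_one (hq0 : 0 ≤ q) (hq1 : q < 1) {x : ℝ} (hx : |x| < 1) :
    qPochInf q x * qSeries q 1 x = 1 := by
  have hq : |q| < 1 := by rwa [abs_of_nonneg hq0]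
  have hstep (y : ℝ) (hy : |y| < 1) :
      qPochInf q y * qSeries q 1 y = qPochInf q (y * q) * qSeries q 1 (y * q) := by
    have hyq : |y * q| < 1 := by simpa using (abs_mul_pow_le hq.le y 1).trans_lt hy
    have hF : qSeries q 1 y - qSeries q 1 (y * q) = y * qSeries q 1 y :=
      qSeries_sub_qSeries_mul hq0 hq1 (summable_div_qFac hq0 hq1 (summable_abs_one_mul_pow hy))
        (summable_div_qFac hq0 hq1 (summable_abs_one_mul_pow hyq))
    rw [qPochInf_eq_one_sub_mul hq y]
    linear_combination qPochInf q (y * q) * hF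
  have hconst (n : ℕ) :
      qPochInf q (x * q ^ n) * qSeries q 1 (x * q ^ n) = qPochInf q x * qSeries q 1 x := by
    induction n with
    | zero => simp
    | succ n ih =>
      rw [← ih, hstep _ ((abs_mul_pow_le hq.le x n).trans_lt hx), pow_succ, mul_assoc]
  have hlim := (tendsto_qPochInf_mul_pow hq hx).mul (tendsto_qSeries hq0 hq1
    (summable_abs_one_mul_pow (by rwa [abs_abs]))
    (by simpa using (tendsto_pow_atTop_nhds_zero_of_abs_lt_one hq).const_mul x)
    (abs_mul_pow_le hq.le x))
  simp only [hconst, Pi.one_apply, mul_one] at hlim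
  exact tendsto_nhds_unique tendsto_const_nhds hlim

lemma qPochInf_mul_qSeries_natCast_sub (hq0 : 0 ≤ q) (hq1 : q < 1) {y : ℝ} (hy : |y| < 1) :
    qPochInf q y * qSeries q Nat.cast y - qPochInf q (y * q) * qSeries q Nat.cast (y * q)
      = y / (1 - y) := by
  have hq : |q| < 1 := by rwa [abs_of_nonneg hq0]
  have hyq : |y * q| < 1 := by simpa using (abs_mul_pow_le hq.le y 1).trans_lt hy
  have hsumF := summable_div_qFac hq0 hq1 (summable_abs_one_mul_pow hy)
  have hsumS := summable_div_qFac hq0 hq1 (summable_abs_natCast_mul_pow hy)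
  have hS := qSeries_sub_qSeries_mul hq0 hq1 hsumS
    (summable_div_qFac hq0 hq1 (summable_abs_natCast_mul_pow hyq))
  have hsplit :
      qSeries q (fun k => ((k + 1 : ℕ) : ℝ)) y = qSeries q Nat.cast y + qSeries q 1 y := by
    rw [qSeries, qSeries, qSeries, ← hsumS.tsum_add hsumF]
    congr 1 with k
    push_cast [Pi.one_apply]
    ring
  have hE := qPochInf_mul_qSeries_one hq0 hq1 hy
  rw [qPochInf_eq_one_sub_mul hq y] at hE ⊢
  rw [hsplit] at hS
  have hy1 : 1 - y ≠ 0 := sub_ne_zero.2 (ne_of_lt (lt_of_abs_lt hy)).symm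
  rw [eq_div_iff hy1]
  linear_combination (1 - y) * qPochInf q (y * q) * hS + y * hE

lemma hasSum_mul_pow_div_one_sub_mul_pow (hq0 : 0 ≤ q) (hq1 : q < 1) {x : ℝ}
    (hx0 : 0 ≤ x) (hx1 : x < 1) :
    HasSum (fun i => x * q ^ i / (1 - x * q ^ i)) (qPochInf q x * qSeries q Nat.cast x) := by
  have hq : |q| < 1 := by rwa [abs_of_nonneg hq0]
  have hx : |x| < 1 := by rwa [abs_of_nonneg hx0]
  set T : ℝ → ℝ := fun y => qPochInf q y * qSeries q Nat.cast y
  have hterm (i : ℕ) : x * q ^ i / (1 - x * q ^ i) = T (x * q ^ i) - T (x * q ^ (i + 1)) := by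
    rw [pow_succ, ← mul_assoc]
    exact (qPochInf_mul_qSeries_natCast_sub hq0 hq1 ((abs_mul_pow_le hq.le x i).trans_lt hx)).symm
  have hT : Tendsto (fun n => T (x * q ^ n)) atTop (𝓝 0) := by
    simpa using (tendsto_qPochInf_mul_pow hq hx).mul (tendsto_qSeries hq0 hq1
      (summable_abs_natCast_mul_pow (by rwa [abs_abs]))
      (by simpa using (tendsto_pow_atTop_nhds_zero_of_abs_lt_one hq).const_mul x)
      (abs_mul_pow_le hq.le x))
  have hnonneg (i : ℕ) : 0 ≤ x * q ^ i / (1 - x * q ^ i) :=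
    div_nonneg (by positivity)
      (sub_nonneg.2 ((le_abs_self _).trans ((abs_mul_pow_le hq.le x i).trans hx.le)))
  rw [hasSum_iff_tendsto_nat_of_nonneg hnonneg]
  simp_rw [hterm, sum_range_sub']
  simpa using (tendsto_const_nhds (x := T x)).sub hT

end

/-- **Mean of the q-geometric distribution.** For `q, α ∈ (0,1)`, the series
`∑_k k αᵏ/(k)_q` converges and `(α;q)_∞ ∑_k k αᵏ/(k)_q = ∑_i α qⁱ/(1 - α qⁱ)`;
i.e. the mean of `qGeom(α)` is `γ(α) = α (log E_q)'(α)`, where `E_q(x) = (x;q)_∞⁻¹`. -/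
theorem qgeom_mean (q α : ℝ) (hq : q ∈ Set.Ioo (0 : ℝ) 1) (hα : α ∈ Set.Ioo (0 : ℝ) 1) :
    Summable (fun k : ℕ => (k : ℝ) * α ^ k / qFac q k) ∧
    qPochInf q α * (∑' k : ℕ, (k : ℝ) * α ^ k / qFac q k)
      = ∑' i : ℕ, α * q ^ i / (1 - α * q ^ i) := by
  obtain ⟨hq0, hq1⟩ := hq
  obtain ⟨hα0, hα1⟩ := hα
  refine ⟨summable_div_qFac hq0.le hq1 (summable_abs_natCast_mul_pow ?_), ?_⟩
  · rwa [abs_of_pos hα0]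
  · exact (hasSum_mul_pow_div_one_sub_mul_pow hq0.le hq1 hα0.le hα1).tsum_eq.symm
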